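/- arXiv:2512.18763 — 4 statements merged into one kernel-verified Lean document; each statement's English description precedes it below -/
import Mathlib

section
/- Let C₁, …, C_K be pairwise distinct positive definite D×D real matrices. For each k, let Q_k be a nonzero finite linear combination of Gaussian functions z ↦ exp(−(z−m)ᵀ C_k⁻¹ (z−m)) with various centers m ∈ ℝ^D. If β₁, …, β_K are real numbers with ∑_{k=1}^K β_k Q_k = 0 (as functions on ℝ^D), then β_k = 0 for all k. -/
open scoped Matrix
open Finset Filter


lemma tendsto_aux {d e : ℝ} (h : d < 0 ∨ (d = 0 ∧ e < 0)) :
    Tendsto (fun t : ℝ => Real.exp (d * t^2 + e * t)) atTop (nhds 0) := by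
  apply Real.tendsto_exp_atBot.comp
  rcases h with hd | ⟨hd, he⟩
  · have h : (fun t : ℝ => d * t^2 + e * t) = fun t => t * (d * t + e) := by funext t; ring
    rw [h]
    exact tendsto_id.atTop_mul_atBot₀
      (tendsto_atBot_add_const_right _ e (tendsto_id.const_mul_atTop_of_neg hd))
  · subst hd
    have h : (fun t : ℝ => (0:ℝ) * t^2 + e * t) = fun t => e * t := by funext t; ring
    rw [h]; exact tendsto_id.const_mul_atTop_of_neg he

lemma exp_indep {ι : Type} : ∀ (n : ℕ) (s : Finset ι) (a b c : ι → ℝ),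
    (s.image (fun i => (a i, b i))).card ≤ n →
    (∀ t : ℝ, ∑ i ∈ s, c i * Real.exp (-(a i) * t^2 + b i * t) = 0) →
    ∀ p : ℝ × ℝ, ∑ i ∈ s.filter (fun i => (a i, b i) = p), c i = 0 := by
  classical
  intro n
  induction n with
  | zero =>
    intro s a b c hcard _ p
    have hs : s = ∅ := by
      have := Finset.card_eq_zero.mp (Nat.le_zero.mp hcard)
      exact Finset.image_eq_empty.mp this
    subst hs; simp
  | succ n ih =>
    intro s a b c hcard hsum
    by_cases hs : s = ∅
    · subst hs; simp
    set pr : ι → ℝ × ℝ := fun i => (a i, b i) with hpr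
    set P := s.image pr with hPdef
    have hP : P.Nonempty := (Finset.image_nonempty).mpr (Finset.nonempty_of_ne_empty hs)
    set α := (P.image Prod.fst).min' (hP.image _) with hα
    set B := (P.filter (fun p => p.1 = α)).image Prod.snd with hB
    have hBne : B.Nonempty := by
      obtain ⟨p1, hp1P, hp1⟩ : ∃ p1 ∈ P, p1.1 = α := by
        have := Finset.min'_mem (P.image Prod.fst) (hP.image _)
        obtain ⟨p1, hp1P, hp1⟩ := Finset.mem_image.mp this
        exact ⟨p1, hp1P, hp1⟩
      exact ⟨p1.2, Finset.mem_image_of_mem _ (Finset.mem_filter.mpr ⟨hp1P, hp1⟩)⟩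
    set βm := B.max' hBne with hβm
    set p0 : ℝ × ℝ := (α, βm) with hp0
    have hp0P : p0 ∈ P := by
      have := Finset.max'_mem B hBne
      obtain ⟨p1, hp1, hp1e⟩ := Finset.mem_image.mp this
      obtain ⟨hp1P, hp1a⟩ := Finset.mem_filter.mp hp1
      have : p1 = p0 := Prod.ext hp1a hp1e
      rwa [← this]
    have hlt : ∀ p ∈ P, p ≠ p0 → α < p.1 ∨ (p.1 = α ∧ p.2 < βm) := by
      intro p hpP hne
      have h1 : α ≤ p.1 :=
        Finset.min'_le _ _ (Finset.mem_image_of_mem Prod.fst hpP)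
      rcases lt_or_eq_of_le h1 with h | h
      · exact Or.inl h
      · refine Or.inr ⟨h.symm, ?_⟩
        have h2 : p.2 ≤ βm :=
          Finset.le_max' _ _ (Finset.mem_image_of_mem Prod.snd
            (Finset.mem_filter.mpr ⟨hpP, h.symm⟩))
        rcases lt_or_eq_of_le h2 with h2' | h2'
        · exact h2'
        · exact absurd (Prod.ext h.symm h2') hne
    set F : ℝ × ℝ → ℝ := fun p => ∑ i ∈ s.filter (fun i => pr i = p), c i with hF
    have fibeq : ∀ (p : ℝ × ℝ) (t : ℝ),
        (∑ i ∈ s.filter (fun i => pr i = p), c i * Real.exp (-(a i) * t^2 + b i * t))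
          = F p * Real.exp (-p.1 * t^2 + p.2 * t) := by
      intro p t
      rw [hF, Finset.sum_mul]
      refine Finset.sum_congr rfl fun i hi => ?_
      have h := (Finset.mem_filter.mp hi).2
      have h1 : a i = p.1 := by rw [← h]
      have h2 : b i = p.2 := by rw [← h]
      rw [h1, h2]
    have hgrp : ∀ t : ℝ, ∑ p ∈ P, F p * Real.exp (-p.1 * t^2 + p.2 * t) = 0 := by
      intro t
      have hfib := Finset.sum_fiberwise_of_maps_to (s := s) (t := P) (g := pr)
        (fun i hi => Finset.mem_image_of_mem pr hi)
        (fun i => c i * Real.exp (-(a i) * t^2 + b i * t))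
      calc ∑ p ∈ P, F p * Real.exp (-p.1 * t^2 + p.2 * t)
          = ∑ p ∈ P, ∑ i ∈ s.filter (fun i => pr i = p),
              c i * Real.exp (-(a i) * t^2 + b i * t) :=
            Finset.sum_congr rfl fun p _ => (fibeq p t).symm
        _ = ∑ i ∈ s, c i * Real.exp (-(a i) * t^2 + b i * t) := hfib
        _ = 0 := hsum t
    have hGzero : ∀ t : ℝ,
        (∑ p ∈ P, F p * Real.exp ((α - p.1) * t^2 + (p.2 - βm) * t)) = 0 := by
      intro t
      have heach : ∀ p ∈ P, F p * Real.exp ((α - p.1) * t^2 + (p.2 - βm) * t)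
          = (F p * Real.exp (-p.1 * t^2 + p.2 * t)) * Real.exp (α * t^2 - βm * t) := by
        intro p _
        rw [mul_assoc, ← Real.exp_add]
        congr 2
        ring
      rw [Finset.sum_congr rfl heach, ← Finset.sum_mul, hgrp t, zero_mul]
    have hFp0 : F p0 = 0 := by
      have hT : Filter.Tendsto
          (fun t : ℝ => ∑ p ∈ P, F p * Real.exp ((α - p.1) * t^2 + (p.2 - βm) * t))
          Filter.atTop (nhds (∑ p ∈ P, if p = p0 then F p0 else 0)) := by
        apply tendsto_finset_sum
        intro p hp
        by_cases hpp : p = p0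
        · rw [hpp]
          simp only [if_pos rfl]
          have heq : (fun t : ℝ => F p0 * Real.exp ((α - p0.1) * t^2 + (p0.2 - βm) * t))
              = fun _ => F p0 := by
            funext t
            have h1 : α - p0.1 = 0 := by simp [hp0]
            have h2 : p0.2 - βm = 0 := by simp [hp0]
            rw [h1, h2]; simp
          rw [heq]; exact tendsto_const_nhds
        · simp only [if_neg hpp]
          have hd : (α - p.1) < 0 ∨ ((α - p.1) = 0 ∧ (p.2 - βm) < 0) := by
            rcases hlt p hp hpp with h | ⟨h1, h2⟩
            · exact Or.inl (by linarith)
            · exact Or.inr ⟨by linarith, by linarith⟩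
          simpa using (tendsto_aux hd).const_mul (F p)
      have hT0 : Filter.Tendsto
          (fun t : ℝ => ∑ p ∈ P, F p * Real.exp ((α - p.1) * t^2 + (p.2 - βm) * t))
          Filter.atTop (nhds 0) := by
        have : (fun t : ℝ => ∑ p ∈ P, F p * Real.exp ((α - p.1) * t^2 + (p.2 - βm) * t))
            = fun _ => (0:ℝ) := funext hGzero
        rw [this]; exact tendsto_const_nhds
      have hval := tendsto_nhds_unique hT hT0
      rwa [Finset.sum_ite_eq' P p0 (fun _ => F p0), if_pos hp0P] at hval
    have hres : ∀ p : ℝ × ℝ, p ≠ p0 → ∑ i ∈ s.filter (fun i => pr i = p), c i = 0 := by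
      intro p hne
      set s' := s.filter (fun i => ¬ pr i = p0) with hs'
      have hcard' : (s'.image pr).card ≤ n := by
        have hsub : s'.image pr ⊆ P.erase p0 := by
          intro q hq
          obtain ⟨i, hi, rfl⟩ := Finset.mem_image.mp hq
          obtain ⟨his, hneq⟩ := Finset.mem_filter.mp hi
          exact Finset.mem_erase.mpr ⟨hneq, Finset.mem_image_of_mem _ his⟩
        have hle := Finset.card_le_card hsub
        have h2 := Finset.card_erase_of_mem hp0P
        omega
      have hsum' : ∀ t : ℝ, ∑ i ∈ s', c i * Real.exp (-(a i) * t^2 + b i * t) = 0 := by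
        intro t
        have hsplit := Finset.sum_filter_add_sum_filter_not s (fun i => pr i = p0)
          (fun i => c i * Real.exp (-(a i) * t^2 + b i * t))
        have h1 : ∑ i ∈ s.filter (fun i => pr i = p0),
            c i * Real.exp (-(a i) * t^2 + b i * t) = 0 := by
          rw [fibeq p0 t, hFp0, zero_mul]
        have h2 := hsum t
        rw [hs']
        linarith
      have hih := ih s' a b c hcard' hsum' p
      rw [← hih]
      congr 1
      ext i
      simp only [Finset.mem_filter, hs']
      constructor
      · rintro ⟨hi, hpi⟩
        exact ⟨⟨hi, by rw [hpi]; exact hne⟩, hpi⟩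
      · rintro ⟨⟨hi, _⟩, hpi⟩
        exact ⟨hi, hpi⟩
    intro p
    by_cases hpp : p = p0
    · subst hpp
      exact hFp0
    · exact hres p hpp

lemma polar {D : ℕ} {M : Matrix (Fin D) (Fin D) ℝ} (hsym : Mᵀ = M) (h : M ≠ 0) :
    ∃ w, w ⬝ᵥ M.mulVec w ≠ 0 := by
  by_contra hc
  push_neg at hc
  apply h
  ext i j
  have h1 := hc (Pi.single i 1)
  have h2 := hc (Pi.single j 1)
  have h3 := hc (Pi.single i 1 + Pi.single j 1)
  have hs : M j i = M i j := by conv_lhs => rw [← hsym, Matrix.transpose_apply]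
  simp only [Matrix.mulVec_add, dotProduct_add, add_dotProduct,
    Matrix.mulVec_single_one, Matrix.col_apply, single_dotProduct, mul_one, one_mul,
    dotProduct_single] at h1 h2 h3
  simp only [Matrix.zero_apply]
  linarith


lemma eval_quad {D : ℕ} (M : Matrix (Fin D) (Fin D) ℝ) (v : Fin D → ℝ) :
    MvPolynomial.eval v (∑ i, ∑ i', MvPolynomial.C (M i i') * MvPolynomial.X i * MvPolynomial.X i')
      = v ⬝ᵥ M.mulVec v := by
  simp only [map_sum, map_mul, MvPolynomial.eval_C, MvPolynomial.eval_X,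
    dotProduct, Matrix.mulVec, Finset.mul_sum]
  exact Finset.sum_congr rfl fun i _ => Finset.sum_congr rfl fun i' _ => by ring

lemma common_dir {D : ℕ} {J : Type} [Fintype J] (M : J → Matrix (Fin D) (Fin D) ℝ)
    (hM : ∀ j, ∃ w, w ⬝ᵥ (M j).mulVec w ≠ 0) :
    ∃ v : Fin D → ℝ, ∀ j, v ⬝ᵥ (M j).mulVec v ≠ 0 := by
  set q : J → MvPolynomial (Fin D) ℝ :=
    fun j => ∑ i, ∑ i', MvPolynomial.C (M j i i') * MvPolynomial.X i * MvPolynomial.X i' with hq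
  have hqne : ∀ j, q j ≠ 0 := by
    intro j h0
    obtain ⟨w, hw⟩ := hM j
    apply hw
    rw [← eval_quad (M j) w]
    show MvPolynomial.eval w (q j) = 0
    simp [h0]
  have hprod : (∏ j, q j) ≠ 0 := Finset.prod_ne_zero_iff.mpr fun j _ => hqne j
  by_contra hc
  push_neg at hc
  apply hprod
  apply MvPolynomial.funext
  intro x
  obtain ⟨j, hj⟩ := hc x
  rw [map_prod, map_zero]
  exact Finset.prod_eq_zero (Finset.mem_univ j) (by rw [eval_quad]; exact hj)


lemma quad_expand {D : ℕ} (A : Matrix (Fin D) (Fin D) ℝ) (hA : Aᵀ = A)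
    (w v : Fin D → ℝ) (t : ℝ) :
    (w + t • v) ⬝ᵥ A.mulVec (w + t • v)
      = (v ⬝ᵥ A.mulVec v) * t^2 + (2 * (v ⬝ᵥ A.mulVec w)) * t + w ⬝ᵥ A.mulVec w := by
  have hsym : w ⬝ᵥ A.mulVec v = v ⬝ᵥ A.mulVec w := by
    rw [Matrix.dotProduct_mulVec, ← Matrix.mulVec_transpose, hA, dotProduct_comm]
  simp only [Matrix.mulVec_add, Matrix.mulVec_smul, dotProduct_add,
    add_dotProduct, dotProduct_smul, smul_dotProduct, smul_eq_mul, hsym]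
  ring


/-- Linear independence of the Gaussian pre-RKHSs `ℋ_{C_k}^pre` for pairwise
distinct positive definite covariance matrices. -/
theorem stmt_0 (D K : ℕ) (C : Fin K → Matrix (Fin D) (Fin D) ℝ)
    (hC : ∀ k, (C k).PosDef)
    (hdist : ∀ k k', k ≠ k' → C k ≠ C k')
    (Q : Fin K → (Fin D → ℝ) → ℝ)
    (hQ : ∀ k, ∃ (L : ℕ) (ξ : Fin L → ℝ) (m : Fin L → (Fin D → ℝ)),
      Q k = fun z => ∑ l, ξ l *
        Real.exp (-((z - m l) ⬝ᵥ ((C k)⁻¹).mulVec (z - m l))))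
    (hQ0 : ∀ k, Q k ≠ 0)
    (β : Fin K → ℝ)
    (hsum : ∀ z : Fin D → ℝ, ∑ k, β k * Q k z = 0) :
    ∀ k, β k = 0 := by
  classical
  set A : Fin K → Matrix (Fin D) (Fin D) ℝ := fun k => (C k)⁻¹ with hA
  have hApd : ∀ k, (A k).PosDef := fun k => (hC k).inv
  have hAsym : ∀ k, (A k)ᵀ = A k := fun k => by
    rw [← Matrix.conjTranspose_eq_transpose_of_trivial]; exact (hApd k).1
  have hAinj : ∀ k k', k ≠ k' → A k ≠ A k' := by
    intro k k' hkk' h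
    apply hdist k k' hkk'
    have h1 : ((C k)⁻¹)⁻¹ = ((C k')⁻¹)⁻¹ := by
      show (A k)⁻¹ = (A k')⁻¹
      rw [h]
    rwa [Matrix.nonsing_inv_nonsing_inv _ (isUnit_iff_ne_zero.mpr (hC k).det_pos.ne'),
      Matrix.nonsing_inv_nonsing_inv _ (isUnit_iff_ne_zero.mpr (hC k').det_pos.ne')] at h1
  obtain ⟨v, hv⟩ := common_dir (J := {pp : Fin K × Fin K // pp.1 ≠ pp.2})
    (fun j => A j.1.1 - A j.1.2)
    (fun j => polar (by rw [Matrix.transpose_sub, hAsym, hAsym])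
      (sub_ne_zero.mpr (hAinj _ _ j.2)))
  have hvsep : ∀ k k', k ≠ k' → v ⬝ᵥ (A k).mulVec v ≠ v ⬝ᵥ (A k').mulVec v := by
    intro k k' hkk' h
    apply hv ⟨(k, k'), hkk'⟩
    simp [Matrix.sub_mulVec, dotProduct_sub, h]
  choose L ξ m hQf using hQ
  intro k0
  obtain ⟨z0, hz0⟩ : ∃ z0, Q k0 z0 ≠ 0 := Function.ne_iff.mp (hQ0 k0)
  set a : ((k : Fin K) × Fin (L k)) → ℝ := fun i => v ⬝ᵥ (A i.1).mulVec v with ha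
  set bb : ((k : Fin K) × Fin (L k)) → ℝ :=
    fun i => -2 * (v ⬝ᵥ (A i.1).mulVec (z0 - m i.1 i.2)) with hbb
  set cc : ((k : Fin K) × Fin (L k)) → ℝ := fun i => β i.1 * ξ i.1 i.2 *
    Real.exp (-((z0 - m i.1 i.2) ⬝ᵥ (A i.1).mulVec (z0 - m i.1 i.2))) with hcc
  have hsum1 : ∀ t : ℝ, ∑ i : (k : Fin K) × Fin (L k),
      cc i * Real.exp (-(a i) * t^2 + bb i * t) = 0 := by
    intro t
    rw [← hsum (z0 + t • v), ← Finset.univ_sigma_univ, Finset.sum_sigma]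
    refine Finset.sum_congr rfl fun k _ => ?_
    simp only [hQf k]
    rw [Finset.mul_sum]
    refine Finset.sum_congr rfl fun l _ => ?_
    have hveq : (z0 + t • v) - m k l = (z0 - m k l) + t • v := by abel
    rw [hveq, quad_expand (A k) (hAsym k) (z0 - m k l) v t]
    simp only [ha, hbb, hcc]
    rw [mul_assoc, ← Real.exp_add,
      show -((z0 - m k l) ⬝ᵥ (A k).mulVec (z0 - m k l))
        + (-(v ⬝ᵥ (A k).mulVec v) * t^2 + -2 * (v ⬝ᵥ (A k).mulVec (z0 - m k l)) * t)
      = -((v ⬝ᵥ (A k).mulVec v) * t^2 + 2 * (v ⬝ᵥ (A k).mulVec (z0 - m k l)) * t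
          + (z0 - m k l) ⬝ᵥ (A k).mulVec (z0 - m k l)) from by ring]
    ring
  have key := exp_indep
    ((Finset.univ : Finset ((k : Fin K) × Fin (L k))).image (fun i => (a i, bb i))).card
    Finset.univ a bb cc le_rfl hsum1
  have hQ0sum : β k0 * Q k0 z0 = ∑ l, cc ⟨k0, l⟩ := by
    simp only [hQf k0]
    rw [Finset.mul_sum]
    refine Finset.sum_congr rfl fun l _ => ?_
    simp only [hcc]
    ring
  have hzero : ∑ l, cc ⟨k0, l⟩ = 0 := by
    rw [← Finset.sum_fiberwise_of_maps_to (s := (Finset.univ : Finset (Fin (L k0))))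
      (t := Finset.univ.image (fun l => bb ⟨k0, l⟩)) (g := fun l => bb ⟨k0, l⟩)
      (fun l hl => Finset.mem_image_of_mem _ hl) (fun l => cc ⟨k0, l⟩)]
    refine Finset.sum_eq_zero fun j _ => ?_
    have h := key (v ⬝ᵥ (A k0).mulVec v, j)
    rw [Finset.sum_filter] at h
    rw [← Finset.univ_sigma_univ, Finset.sum_sigma] at h
    rw [Finset.sum_eq_single_of_mem k0 (Finset.mem_univ k0)] at h
    · rw [← h, Finset.sum_filter]
      refine Finset.sum_congr rfl fun l _ => ?_
      congr 1
      simp only [ha, hbb, Prod.mk.injEq, eq_self_iff_true, true_and]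
    · intro k _ hk
      refine Finset.sum_eq_zero fun l _ => ?_
      rw [if_neg]
      intro hcon
      exact hvsep k k0 hk (Prod.ext_iff.mp hcon).1
  have hfin : β k0 * Q k0 z0 = 0 := by rw [hQ0sum, hzero]
  exact (mul_eq_zero.mp hfin).resolve_right hz0
end

section
/- Let 𝔷 ⊂ ℝ^D be compact and let 𝔓 be a Borel probability measure on 𝔷. Then the set of Gaussian mixtures, i.e., all finite linear combinations ∑_{k=1}^K ξ_k 𝒢(· | m_k, C_k) with ξ_k ∈ ℝ, m_k ∈ ℝ^D, and C_k positive definite, is dense in L²(𝔷, 𝔓). -/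
open scoped Matrix ENNReal
open MeasureTheory

namespace GaussDenseAux

variable {D : ℕ}

/-- Isotropic Gaussian with centre `m` and inverse width `t`. -/
noncomputable def gaussF (m : Fin D → ℝ) (t : ℝ) : (Fin D → ℝ) → ℝ :=
  fun z => Real.exp (-(t * ((z - m) ⬝ᵥ (z - m))))

lemma dot_nonneg (v : Fin D → ℝ) : 0 ≤ v ⬝ᵥ v :=
  Finset.sum_nonneg fun _ _ => mul_self_nonneg _

lemma continuous_gaussF (m : Fin D → ℝ) (t : ℝ) : Continuous (gaussF m t) := by
  apply Real.continuous_exp.comp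
  apply Continuous.neg
  apply continuous_const.mul
  show Continuous fun z : Fin D → ℝ => ∑ i, (z - m) i * (z - m) i
  exact continuous_finset_sum _ fun i _ =>
    (((continuous_apply i).sub continuous_const).mul
      ((continuous_apply i).sub continuous_const))

/-- Mixed centre for the product of two Gaussians. -/
noncomputable def mmix (a b : ℝ) (m₁ m₂ : Fin D → ℝ) : Fin D → ℝ :=
  fun i => (a + b)⁻¹ * (a * m₁ i + b * m₂ i)

lemma quad_id {a b : ℝ} (ha : 0 < a) (hb : 0 < b) (x p q : ℝ) :
    a * ((x - p) * (x - p)) + b * ((x - q) * (x - q)) =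
      (a + b) * ((x - (a + b)⁻¹ * (a * p + b * q)) * (x - (a + b)⁻¹ * (a * p + b * q)))
        + a * b / (a + b) * ((p - q) * (p - q)) := by
  have hab : a + b ≠ 0 := by positivity
  field_simp
  ring

lemma dot_id {a b : ℝ} (ha : 0 < a) (hb : 0 < b) (m₁ m₂ z : Fin D → ℝ) :
    a * ((z - m₁) ⬝ᵥ (z - m₁)) + b * ((z - m₂) ⬝ᵥ (z - m₂)) =
      (a + b) * ((z - mmix a b m₁ m₂) ⬝ᵥ (z - mmix a b m₁ m₂))
        + a * b / (a + b) * ((m₁ - m₂) ⬝ᵥ (m₁ - m₂)) := by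
  simp only [dotProduct, Pi.sub_apply, Finset.mul_sum, mmix]
  rw [← Finset.sum_add_distrib, ← Finset.sum_add_distrib]
  exact Finset.sum_congr rfl fun i _ => quad_id ha hb _ _ _

lemma gauss_mul {a b : ℝ} (ha : 0 < a) (hb : 0 < b) (m₁ m₂ z : Fin D → ℝ) :
    gaussF m₁ a z * gaussF m₂ b z =
      Real.exp (-(a * b / (a + b) * ((m₁ - m₂) ⬝ᵥ (m₁ - m₂)))) *
        gaussF (mmix a b m₁ m₂) (a + b) z := by
  unfold gaussF
  rw [← Real.exp_add, ← Real.exp_add]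
  congr 1
  have h := dot_id ha hb m₁ m₂ z
  linarith

end GaussDenseAux

open GaussDenseAux

/-- Gaussian mixtures are dense in `L²(Z, 𝔓)` for a compact `Z ⊂ ℝ^D` and a
Borel probability measure `𝔓` supported on `Z`. -/
theorem stmt_4 (D : ℕ) (Z : Set (Fin D → ℝ)) (hZ : IsCompact Z)
    (𝔓 : Measure (Fin D → ℝ)) [IsProbabilityMeasure 𝔓] (h𝔓 : 𝔓 Zᶜ = 0)
    (f : (Fin D → ℝ) → ℝ) (hf : MemLp f 2 𝔓)
    (ε : ℝ) (hε : 0 < ε) :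
    ∃ (K : ℕ) (ξ : Fin K → ℝ) (m : Fin K → (Fin D → ℝ))
      (C : Fin K → Matrix (Fin D) (Fin D) ℝ),
      (∀ k, (C k).PosDef) ∧
      eLpNorm (fun z => f z - ∑ k, ξ k *
          Real.exp (-((z - m k) ⬝ᵥ ((C k)⁻¹).mulVec (z - m k)))) 2 𝔓
        ≤ ENNReal.ofReal ε := by
  classical
  haveI : CompactSpace Z := isCompact_iff_compactSpace.mp hZ
  -- Step 1: approximate `f` by a continuous function `g` in `L²`.
  have hε2 : (ENNReal.ofReal (ε / 2)) ≠ 0 := by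
    simp only [ne_eq, ENNReal.ofReal_eq_zero, not_le]
    linarith
  obtain ⟨g, -, hfg, g_cont, g_mem⟩ :=
    hf.exists_hasCompactSupport_eLpNorm_sub_le (by norm_num : (2 : ℝ≥0∞) ≠ ⊤) hε2
  -- The Gaussian continuous maps on `Z`.
  let gc : ((Fin D → ℝ) × {t : ℝ // 0 < t}) → C(Z, ℝ) := fun p =>
    ⟨fun z => gaussF p.1 p.2.1 z.1,
      (continuous_gaussF p.1 p.2.1).comp continuous_subtype_val⟩
  let M : Submodule ℝ C(Z, ℝ) := Submodule.span ℝ (Set.range gc)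
  have hgen : ∀ p, gc p ∈ M := fun p => Submodule.subset_span ⟨p, rfl⟩
  -- `M` is closed under multiplication.
  have hmulgen : ∀ x ∈ Set.range gc, ∀ y ∈ Set.range gc, x * y ∈ M := by
    rintro _ ⟨p, rfl⟩ _ ⟨q, rfl⟩
    have key : gc p * gc q =
        Real.exp (-(p.2.1 * q.2.1 / (p.2.1 + q.2.1) * ((p.1 - q.1) ⬝ᵥ (p.1 - q.1)))) •
          gc (mmix p.2.1 q.2.1 p.1 q.1, ⟨p.2.1 + q.2.1, add_pos p.2.2 q.2.2⟩) := by
      ext z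
      simp only [ContinuousMap.mul_apply, ContinuousMap.smul_apply, smul_eq_mul, gc,
        ContinuousMap.coe_mk]
      exact gauss_mul p.2.2 q.2.2 p.1 q.1 z.1
    rw [key]
    exact M.smul_mem _ (hgen _)
  have hMmul : ∀ x ∈ M, ∀ y ∈ M, x * y ∈ M := by
    have hle : M * M ≤ M := by
      rw [Submodule.span_mul_span]
      apply Submodule.span_le.mpr
      rintro _ ⟨x, hx, y, hy, rfl⟩
      exact hmulgen x hx y hy
    intro x hx y hy
    exact hle (Submodule.mul_mem_mul hx hy)
  let N : NonUnitalSubalgebra ℝ C(Z, ℝ) :=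
    { carrier := (M : Set C(Z, ℝ))
      add_mem' := fun hx hy => M.add_mem hx hy
      zero_mem' := M.zero_mem
      mul_mem' := fun hx hy => hMmul _ hx _ hy
      smul_mem' := fun c _ hx => M.smul_mem c hx }
  -- bound for `⬝ᵥ` on the compact `Z`.
  obtain ⟨R₀, hR₀⟩ := hZ.exists_bound_of_continuousOn
    (Continuous.continuousOn (show Continuous fun z : Fin D → ℝ => z ⬝ᵥ z by
      show Continuous fun z : Fin D → ℝ => ∑ i, z i * z i
      exact continuous_finset_sum _ fun i _ => (continuous_apply i).mul (continuous_apply i)))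
  set R : ℝ := max R₀ 0 with hRdef
  have hQle : ∀ z : Z, (z.1 ⬝ᵥ z.1) ≤ R := fun z =>
    le_trans (le_trans (le_abs_self _) (hR₀ z.1 z.2)) (le_max_left _ _)
  -- `1` belongs to the closure of `N`.
  have h1 : (1 : C(Z, ℝ)) ∈ N.topologicalClosure := by
    apply Metric.mem_closure_iff.mpr
    intro δ hδ
    set t : ℝ := δ / (2 * (R + 1)) with htdef
    have hR1 : 0 < R + 1 := by positivity
    have ht : 0 < t := by positivity
    refine ⟨gc (0, ⟨t, ht⟩), hgen _, ?_⟩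
    rw [ContinuousMap.dist_lt_iff hδ]
    intro z
    have hz0 : (z.1 - 0) ⬝ᵥ (z.1 - 0) = z.1 ⬝ᵥ z.1 := by rw [sub_zero]
    simp only [ContinuousMap.coe_mk, ContinuousMap.one_apply, gc, gaussF, hz0]
    set Q : ℝ := z.1 ⬝ᵥ z.1 with hQdef
    have hQ0 : 0 ≤ Q := dot_nonneg _
    have hQR : Q ≤ R := hQle z
    have hexple : Real.exp (-(t * Q)) ≤ 1 := by
      rw [← Real.exp_zero]
      apply Real.exp_le_exp.mpr
      nlinarith
    have hlow : 1 - t * Q ≤ Real.exp (-(t * Q)) := by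
      have := Real.add_one_le_exp (-(t * Q))
      linarith
    rw [Real.dist_eq, abs_of_nonneg (by linarith)]
    have h1' : t * Q ≤ t * R := mul_le_mul_of_nonneg_left hQR ht.le
    have h2' : t * (R + 1) = δ / 2 := by
      rw [htdef]; field_simp
    nlinarith
  let A : Subalgebra ℝ C(Z, ℝ) := N.topologicalClosure.toSubalgebra h1
  have hNle : ∀ x ∈ M, x ∈ A := fun x hx =>
    N.le_topologicalClosure hx
  -- `A` separates points.
  have hsep : A.SeparatesPoints := by
    intro x y hxy
    refine ⟨_, ⟨gc (x.1, ⟨1, one_pos⟩), hNle _ (hgen _), rfl⟩, ?_⟩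
    simp only [ContinuousMap.coe_mk, gc, gaussF]
    have hxx : (x.1 - x.1) ⬝ᵥ (x.1 - x.1) = 0 := by simp
    have hyx : y.1 - x.1 ≠ 0 := by
      intro h
      exact hxy (Subtype.ext (by rwa [sub_eq_zero] at h)).symm
    have hpos : 0 < (y.1 - x.1) ⬝ᵥ (y.1 - x.1) :=
      lt_of_le_of_ne (dot_nonneg _) (fun h => hyx (dotProduct_self_eq_zero.mp h.symm))
    rw [hxx, ne_eq, Real.exp_eq_exp]
    intro hcontra
    nlinarith
  have hSW := ContinuousMap.subalgebra_topologicalClosure_eq_top_of_separatesPoints A hsep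
  -- every continuous function on `Z` is in the closure of `M`.
  have hAcl : (A : Set C(Z, ℝ)) = closure (M : Set C(Z, ℝ)) := rfl
  have hdense : ∀ h : C(Z, ℝ), h ∈ closure (M : Set C(Z, ℝ)) := by
    intro h
    have h1' : h ∈ A.topologicalClosure := by rw [hSW]; exact Algebra.mem_top
    have h2' : h ∈ closure (A : Set C(Z, ℝ)) := h1'
    rwa [hAcl, closure_closure] at h2'
  -- Approximate the restriction of `g` by an element of `M`.
  let gZ : C(Z, ℝ) := ⟨fun z => g z.1, g_cont.comp continuous_subtype_val⟩
  obtain ⟨p, hpM, hdist⟩ := Metric.mem_closure_iff.mp (hdense gZ) (ε / 2) (by linarith)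
  obtain ⟨n, ξ, gsel, hsum⟩ := Submodule.mem_span_set'.mp hpM
  have hpr : ∀ i, ∃ pr, gc pr = (gsel i : C(Z, ℝ)) := fun i => (gsel i).2
  choose pr hprspec using hpr
  -- the Gaussian mixture as a function on `ℝ^D`.
  set P : (Fin D → ℝ) → ℝ := fun z => ∑ i, ξ i * gaussF (pr i).1 (pr i).2.1 z with hPdef
  have hP_cont : Continuous P :=
    continuous_finset_sum _ fun i _ => continuous_const.mul (continuous_gaussF _ _)
  have hpP : ∀ z : Z, p z = P z.1 := by
    intro z
    rw [← hsum]
    simp only [hPdef, ContinuousMap.coe_sum, Finset.sum_apply, ContinuousMap.coe_smul,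
      Pi.smul_apply, smul_eq_mul]
    refine Finset.sum_congr rfl fun i _ => ?_
    rw [← hprspec i]
    rfl
  -- a.e. membership in `Z`.
  have hae : ∀ᵐ z ∂𝔓, z ∈ Z := by
    rw [MeasureTheory.ae_iff]
    simpa [Set.compl_def] using h𝔓
  have hbound : ∀ᵐ z ∂𝔓, ‖g z - P z‖ ≤ ε / 2 := by
    filter_upwards [hae] with z hz
    have hd := ContinuousMap.dist_apply_le_dist (f := gZ) (g := p) ⟨z, hz⟩
    have : dist (g z) (P z) ≤ dist gZ p := by
      rw [← hpP ⟨z, hz⟩]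
      exact hd
    rw [Real.dist_eq] at this
    rw [Real.norm_eq_abs]
    exact this.trans hdist.le
  have h2 : eLpNorm (fun z => g z - P z) 2 𝔓 ≤ ENNReal.ofReal (ε / 2) := by
    have := eLpNorm_le_of_ae_bound (p := 2) (μ := 𝔓) hbound
    simpa [measure_univ] using this
  -- triangle inequality
  have hsplit : (fun z => f z - P z) = (f - g) + (fun z => g z - P z) := by
    funext z
    simp only [Pi.add_apply, Pi.sub_apply]
    ring
  have htri : eLpNorm (fun z => f z - P z) 2 𝔓 ≤ ENNReal.ofReal ε := by
    rw [hsplit]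
    calc eLpNorm ((f - g) + (fun z => g z - P z)) 2 𝔓
        ≤ eLpNorm (f - g) 2 𝔓 + eLpNorm (fun z => g z - P z) 2 𝔓 :=
          eLpNorm_add_le (hf.aestronglyMeasurable.sub g_mem.aestronglyMeasurable)
            ((g_cont.sub hP_cont).aestronglyMeasurable) (by norm_num)
      _ ≤ ENNReal.ofReal (ε / 2) + ENNReal.ofReal (ε / 2) := add_le_add hfg h2
      _ = ENNReal.ofReal ε := by
          rw [← ENNReal.ofReal_add (by linarith) (by linarith)]
          norm_num
  -- assemble the final data
  refine ⟨n, ξ, fun k => (pr k).1, fun k => ((pr k).2.1)⁻¹ • (1 : Matrix (Fin D) (Fin D) ℝ),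
    ?_, ?_⟩
  · intro k
    set t : ℝ := (pr k).2.1 with htdef
    have ht : 0 < t := (pr k).2.2
    rw [Matrix.posDef_iff_dotProduct_mulVec]
    constructor
    · simp [Matrix.IsHermitian, Matrix.conjTranspose_smul]
    · intro x hx
      have : (t⁻¹ • (1 : Matrix (Fin D) (Fin D) ℝ)) *ᵥ x = t⁻¹ • x := by
        rw [Matrix.smul_mulVec, Matrix.one_mulVec]
      rw [this]
      have hxx : 0 < x ⬝ᵥ x :=
        lt_of_le_of_ne (dot_nonneg _) (fun h => hx (dotProduct_self_eq_zero.mp h.symm))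
      have hstar : (star x : Fin D → ℝ) = x := by
        funext i; simp
      rw [hstar, dotProduct_smul]
      exact mul_pos (inv_pos.mpr ht) hxx
  · have hCinv : ∀ k, (((pr k).2.1)⁻¹ • (1 : Matrix (Fin D) (Fin D) ℝ))⁻¹ =
        (pr k).2.1 • (1 : Matrix (Fin D) (Fin D) ℝ) := by
      intro k
      have ht : (0 : ℝ) < (pr k).2.1 := (pr k).2.2
      apply Matrix.inv_eq_right_inv
      rw [smul_mul_smul_comm, one_mul, inv_mul_cancel₀ ht.ne', one_smul]
    have heq : (fun z => f z - ∑ k, ξ k *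
        Real.exp (-((z - (pr k).1) ⬝ᵥ
          ((((pr k).2.1)⁻¹ • (1 : Matrix (Fin D) (Fin D) ℝ))⁻¹) *ᵥ (z - (pr k).1)))) =
        fun z => f z - P z := by
      funext z
      congr 1
      refine Finset.sum_congr rfl fun k _ => ?_
      rw [hCinv k, Matrix.smul_mulVec, Matrix.one_mulVec, dotProduct_smul]
      rfl
    rw [heq]
    exact htri
end

section
/- The set of all finite real linear combinations of Gaussian functions z ↦ exp(−(z−m)ᵀ C⁻¹ (z−m)), with m ∈ ℝ^D and C positive definite, is dense in L²(ℝ^D) with respect to Lebesgue measure. -/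
open scoped Matrix
open MeasureTheory Filter Topology

namespace GaussAux
variable {D : ℕ}

noncomputable def Q (A : Matrix (Fin D) (Fin D) ℝ) (x : Fin D → ℝ) : ℝ := x ⬝ᵥ A.mulVec x

lemma Q_continuous (A : Matrix (Fin D) (Fin D) ℝ) : Continuous (Q A) := by
  have : Q A = fun x => ∑ i, x i * ∑ j, A i j * x j := by
    funext x
    simp [Q, dotProduct, Matrix.mulVec]
  rw [this]
  fun_prop

lemma Q_pos {A : Matrix (Fin D) (Fin D) ℝ} (hA : A.PosDef) {x : Fin D → ℝ} (hx : x ≠ 0) :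
    0 < Q A x := by
  have := hA.dotProduct_mulVec_pos hx
  simpa [Q] using this

lemma Q_smul (A : Matrix (Fin D) (Fin D) ℝ) (t : ℝ) (x : Fin D → ℝ) :
    Q A (t • x) = t ^ 2 * Q A x := by
  simp [Q, Matrix.mulVec_smul, smul_dotProduct, dotProduct_smul]
  ring

lemma exists_pos_le_Q {A : Matrix (Fin D) (Fin D) ℝ} (hA : A.PosDef) :
    ∃ c > 0, ∀ x, c * ‖x‖ ^ 2 ≤ Q A x := by
  rcases Nat.eq_zero_or_pos D with hD | hD
  · refine ⟨1, one_pos, fun x => ?_⟩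
    subst hD
    have hx : x = 0 := Subsingleton.elim _ _
    rw [hx, norm_zero]
    simp [Q, zero_dotProduct]
  · have hne : (Metric.sphere (0 : Fin D → ℝ) 1).Nonempty := by
      refine ⟨fun _ => 1, ?_⟩
      have : Nonempty (Fin D) := ⟨⟨0, hD⟩⟩
      simp only [Metric.mem_sphere, dist_zero_right]
      rw [pi_norm_const]
      simp
    obtain ⟨x₀, hx₀S, hx₀⟩ := (isCompact_sphere (0 : Fin D → ℝ) 1).exists_isMinOn hne
      ((Q_continuous A).continuousOn)
    have hx₀n : ‖x₀‖ = 1 := by simpa [Metric.mem_sphere, dist_zero_right] using hx₀S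
    have hx₀0 : x₀ ≠ 0 := by intro h; rw [h] at hx₀n; simp at hx₀n
    refine ⟨Q A x₀, Q_pos hA hx₀0, fun x => ?_⟩
    rcases eq_or_ne x 0 with rfl | hx
    · simp [Q, zero_dotProduct]
    · have hn : ‖x‖ ≠ 0 := norm_ne_zero_iff.mpr hx
      set u := ‖x‖⁻¹ • x with hu
      have hun : u ∈ Metric.sphere (0 : Fin D → ℝ) 1 := by
        simp [hu, Metric.mem_sphere, dist_zero_right, norm_smul, abs_of_nonneg,
          inv_mul_cancel₀ hn]
      have h1 : Q A x₀ ≤ Q A u := hx₀ hun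
      have h2 : Q A x = ‖x‖ ^ 2 * Q A u := by
        have : x = ‖x‖ • u := by
          rw [hu, smul_smul, mul_inv_cancel₀ hn, one_smul]
        rw [this, Q_smul]
        congr 1
        rw [norm_smul, Real.norm_eq_abs, abs_of_nonneg (norm_nonneg x)]
        rw [hu, norm_smul, Real.norm_eq_abs, abs_of_nonneg (inv_nonneg.mpr (norm_nonneg x)),
          inv_mul_cancel₀ hn, mul_one]
      rw [h2, mul_comm (Q A x₀)]
      exact mul_le_mul_of_nonneg_left h1 (sq_nonneg _)

noncomputable def gauss (m : Fin D → ℝ) (A : Matrix (Fin D) (Fin D) ℝ) (z : Fin D → ℝ) : ℝ :=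
  Real.exp (-Q A (z - m))

lemma gauss_continuous (m : Fin D → ℝ) (A : Matrix (Fin D) (Fin D) ℝ) :
    Continuous (gauss m A) :=
  Real.continuous_exp.comp <| ((Q_continuous A).comp (continuous_id.sub continuous_const)).neg

lemma gauss_pos (m : Fin D → ℝ) (A : Matrix (Fin D) (Fin D) ℝ) (z : Fin D → ℝ) :
    0 < gauss m A z := Real.exp_pos _

lemma gauss_tendsto {A : Matrix (Fin D) (Fin D) ℝ} (hA : A.PosDef) (m : Fin D → ℝ) :
    Tendsto (gauss m A) (cocompact (Fin D → ℝ)) (𝓝 0) := by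
  obtain ⟨c, hc, hQ⟩ := exists_pos_le_Q hA
  have h1 : Tendsto (fun z : Fin D → ℝ => ‖z - m‖) (cocompact _) atTop := by
    have h0 : Tendsto (fun z : Fin D → ℝ => ‖z‖ - ‖m‖) (cocompact _) atTop :=
      tendsto_atTop_add_const_right _ _ tendsto_norm_cocompact_atTop
    exact tendsto_atTop_mono (fun z => by
      simpa using norm_sub_norm_le z m) h0
  have h2 : Tendsto (fun z : Fin D → ℝ => c * ‖z - m‖ ^ 2) (cocompact _) atTop := by
    have hp : Tendsto (fun t : ℝ => c * t ^ 2) atTop atTop :=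
      (tendsto_pow_atTop two_ne_zero).const_mul_atTop hc
    exact hp.comp h1
  have h3 : Tendsto (fun z : Fin D → ℝ => Real.exp (-(c * ‖z - m‖ ^ 2)))
      (cocompact _) (𝓝 0) := Real.tendsto_exp_neg_atTop_nhds_zero.comp h2
  refine tendsto_of_tendsto_of_tendsto_of_le_of_le tendsto_const_nhds h3
    (fun z => (gauss_pos m A z).le) (fun z => ?_)
  exact Real.exp_le_exp.mpr (neg_le_neg (hQ (z - m)))

lemma dot_swap {A : Matrix (Fin D) (Fin D) ℝ} (hA : Aᵀ = A) (x y : Fin D → ℝ) :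
    x ⬝ᵥ A.mulVec y = y ⬝ᵥ A.mulVec x := by
  rw [Matrix.dotProduct_mulVec, ← Matrix.mulVec_transpose, hA, dotProduct_comm]

lemma Q_sub_expand {A : Matrix (Fin D) (Fin D) ℝ} (hA : Aᵀ = A) (z m : Fin D → ℝ) :
    Q A (z - m) = Q A z - 2 * (z ⬝ᵥ A.mulVec m) + Q A m := by
  have h := dot_swap hA m z
  simp only [Q, Matrix.mulVec_sub, sub_dotProduct, dotProduct_sub]
  rw [h]
  ring

lemma Q_add_matrix (A B : Matrix (Fin D) (Fin D) ℝ) (x : Fin D → ℝ) :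
    Q (A + B) x = Q A x + Q B x := by
  simp [Q, Matrix.add_mulVec, dotProduct_add]

lemma gauss_quad_identity {A₁ A₂ : Matrix (Fin D) (Fin D) ℝ}
    (h₁ : A₁.PosDef) (h₂ : A₂.PosDef) (m₁ m₂ : Fin D → ℝ) :
    ∃ mm : Fin D → ℝ, ∀ z,
      Q A₁ (z - m₁) + Q A₂ (z - m₂)
        = Q (A₁ + A₂) (z - mm) + (Q A₁ (mm - m₁) + Q A₂ (mm - m₂)) := by
  set S := A₁ + A₂ with hS
  have hSpd : S.PosDef := h₁.add h₂
  have hSsym : Sᵀ = S := hSpd.isHermitian.eq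
  have h₁sym : A₁ᵀ = A₁ := h₁.isHermitian.eq
  have h₂sym : A₂ᵀ = A₂ := h₂.isHermitian.eq
  set v := A₁.mulVec m₁ + A₂.mulVec m₂ with hv
  set mm := S⁻¹.mulVec v with hmm
  have hmv : S.mulVec mm = v := by
    rw [hmm, Matrix.mulVec_mulVec,
      Matrix.mul_nonsing_inv _ (Matrix.isUnit_iff_isUnit_det _ |>.mp hSpd.isUnit),
      Matrix.one_mulVec]
  refine ⟨mm, fun z => ?_⟩
  have e1 : Q A₁ (z - m₁) = Q A₁ z - 2 * (z ⬝ᵥ A₁.mulVec m₁) + Q A₁ m₁ := Q_sub_expand h₁sym z m₁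
  have e2 : Q A₂ (z - m₂) = Q A₂ z - 2 * (z ⬝ᵥ A₂.mulVec m₂) + Q A₂ m₂ := Q_sub_expand h₂sym z m₂
  have e3 : Q S (z - mm) = Q S z - 2 * (z ⬝ᵥ S.mulVec mm) + Q S mm := Q_sub_expand hSsym z mm
  have e4 : Q A₁ (mm - m₁) = Q A₁ mm - 2 * (mm ⬝ᵥ A₁.mulVec m₁) + Q A₁ m₁ :=
    Q_sub_expand h₁sym mm m₁
  have e5 : Q A₂ (mm - m₂) = Q A₂ mm - 2 * (mm ⬝ᵥ A₂.mulVec m₂) + Q A₂ m₂ :=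
    Q_sub_expand h₂sym mm m₂
  have e6 : Q S z = Q A₁ z + Q A₂ z := Q_add_matrix _ _ _
  have e7 : Q S mm = Q A₁ mm + Q A₂ mm := Q_add_matrix _ _ _
  have e8 : z ⬝ᵥ S.mulVec mm = z ⬝ᵥ A₁.mulVec m₁ + z ⬝ᵥ A₂.mulVec m₂ := by
    rw [hmv, hv, dotProduct_add]
  have e9 : Q A₁ mm + Q A₂ mm = mm ⬝ᵥ A₁.mulVec m₁ + mm ⬝ᵥ A₂.mulVec m₂ := by
    have h' : mm ⬝ᵥ S.mulVec mm = mm ⬝ᵥ A₁.mulVec m₁ + mm ⬝ᵥ A₂.mulVec m₂ := by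
      rw [hmv, hv, dotProduct_add]
    calc Q A₁ mm + Q A₂ mm = Q S mm := (Q_add_matrix _ _ _).symm
      _ = _ := h'
  rw [e1, e2, e3, e4, e5, e6, e7, e8]
  linarith [e9]

noncomputable def cgauss (m : Fin D → ℝ) {A : Matrix (Fin D) (Fin D) ℝ} (hA : A.PosDef) :
    C(OnePoint (Fin D → ℝ), ℝ) :=
  OnePoint.continuousMapMk ⟨gauss m A, gauss_continuous m A⟩ 0
    (by rw [Filter.coclosedCompact_eq_cocompact]; exact gauss_tendsto hA m)

@[simp] lemma cgauss_coe (m : Fin D → ℝ) {A : Matrix (Fin D) (Fin D) ℝ} (hA : A.PosDef)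
    (z : Fin D → ℝ) : cgauss m hA (z : OnePoint (Fin D → ℝ)) = gauss m A z := rfl
@[simp] lemma cgauss_infty (m : Fin D → ℝ) {A : Matrix (Fin D) (Fin D) ℝ} (hA : A.PosDef) :
    cgauss m hA (OnePoint.infty) = 0 := rfl

lemma cgauss_mul {A₁ A₂ : Matrix (Fin D) (Fin D) ℝ}
    (h₁ : A₁.PosDef) (h₂ : A₂.PosDef) (m₁ m₂ : Fin D → ℝ) :
    ∃ (c : ℝ) (mm : Fin D → ℝ),
      cgauss m₁ h₁ * cgauss m₂ h₂ = c • cgauss mm (h₁.add h₂) := by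
  obtain ⟨mm, hmm⟩ := gauss_quad_identity h₁ h₂ m₁ m₂
  refine ⟨Real.exp (-(Q A₁ (mm - m₁) + Q A₂ (mm - m₂))), mm, ?_⟩
  ext x
  induction x using OnePoint.rec with
  | infty => simp
  | coe z =>
    simp only [ContinuousMap.mul_apply, ContinuousMap.smul_apply, cgauss_coe, smul_eq_mul]
    rw [gauss, gauss, gauss, ← Real.exp_add, ← Real.exp_add]
    congr 1
    have := hmm z
    linarith

noncomputable def GSet (D : ℕ) : Set C(OnePoint (Fin D → ℝ), ℝ) :=
  {g | ∃ (m : Fin D → ℝ) (A : Matrix (Fin D) (Fin D) ℝ) (hA : A.PosDef), g = cgauss m hA}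

noncomputable def Tmod (D : ℕ) : Submodule ℝ C(OnePoint (Fin D → ℝ), ℝ) :=
  Submodule.span ℝ ({1} ∪ GSet D)

lemma mul_mem_Tmod : ∀ (x y : C(OnePoint (Fin D → ℝ), ℝ)),
    x ∈ Tmod D → y ∈ Tmod D → x * y ∈ Tmod D := by
  intro x y hx hy
  have h : Tmod D * Tmod D ≤ Tmod D := by
    rw [Tmod, Submodule.span_mul_span]
    rw [Submodule.span_le]
    rintro w ⟨a, ha, b, hb, rfl⟩
    dsimp only
    rcases ha with rfl | ⟨ma, Aa, hAa, rfl⟩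
    · rw [one_mul]
      exact Submodule.subset_span hb
    · rcases hb with rfl | ⟨mb, Ab, hAb, rfl⟩
      · rw [mul_one]
        exact Submodule.subset_span (Or.inr ⟨ma, Aa, hAa, rfl⟩)
      · obtain ⟨c, mm, hceq⟩ := cgauss_mul hAa hAb ma mb
        rw [hceq]
        exact Submodule.smul_mem _ _
          (Submodule.subset_span (Or.inr ⟨mm, _, hAa.add hAb, rfl⟩))
  exact h (Submodule.mul_mem_mul hx hy)

noncomputable def Talg (D : ℕ) : Subalgebra ℝ C(OnePoint (Fin D → ℝ), ℝ) :=
  (Tmod D).toSubalgebra (Submodule.subset_span (Or.inl rfl)) mul_mem_Tmod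

lemma cgauss_mem_Talg (m : Fin D → ℝ) {A : Matrix (Fin D) (Fin D) ℝ} (hA : A.PosDef) :
    cgauss m hA ∈ Talg D :=
  Submodule.subset_span (Or.inr ⟨m, A, hA, rfl⟩)

lemma Q_self_zero (A : Matrix (Fin D) (Fin D) ℝ) : Q A 0 = 0 := by
  simp [Q, zero_dotProduct]

lemma gauss_self (m : Fin D → ℝ) (A : Matrix (Fin D) (Fin D) ℝ) : gauss m A m = 1 := by
  simp [gauss, Q_self_zero]

lemma gauss_lt_one {A : Matrix (Fin D) (Fin D) ℝ} (hA : A.PosDef) {m z : Fin D → ℝ}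
    (h : z ≠ m) : gauss m A z < 1 := by
  rw [gauss, ← Real.exp_zero]
  apply Real.exp_lt_exp.mpr
  have : z - m ≠ 0 := sub_ne_zero.mpr h
  linarith [Q_pos hA this]

lemma Talg_sep : (Talg D).SeparatesPoints := by
  intro x y hxy
  have key : ∀ z : Fin D → ℝ, ∀ w : OnePoint (Fin D → ℝ), (z : OnePoint (Fin D → ℝ)) ≠ w →
      ∃ f ∈ (fun f : C(OnePoint (Fin D → ℝ), ℝ) => (f : OnePoint (Fin D → ℝ) → ℝ)) ''
        (Talg D : Set C(OnePoint (Fin D → ℝ), ℝ)), f z ≠ f w := by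
    intro z w hzw
    refine ⟨cgauss z (Matrix.PosDef.one (n := Fin D) (R := ℝ)),
      ⟨_, cgauss_mem_Talg z _, rfl⟩, ?_⟩
    induction w using OnePoint.rec with
    | infty =>
      simp only [cgauss_coe, cgauss_infty, gauss_self]
      norm_num
    | coe w' =>
      have hne : w' ≠ z := fun h => hzw (by rw [h])
      simp only [cgauss_coe, gauss_self]
      have := gauss_lt_one (Matrix.PosDef.one (n := Fin D) (R := ℝ)) hne
      exact fun h => absurd h.symm (ne_of_lt this)
  induction x using OnePoint.rec with
  | infty =>
    induction y using OnePoint.rec with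
    | infty => exact absurd rfl hxy
    | coe y' =>
      obtain ⟨f, hf, hne⟩ := key y' OnePoint.infty (Ne.symm hxy)
      exact ⟨f, hf, hne.symm⟩
  | coe x' => exact key x' y hxy

lemma Talg_dense (φ : C(OnePoint (Fin D → ℝ), ℝ)) {δ : ℝ} (hδ : 0 < δ) :
    ∃ ψ ∈ Talg D, ‖ψ - φ‖ < δ := by
  obtain ⟨⟨ψ, hψ⟩, h⟩ :=
    ContinuousMap.exists_mem_subalgebra_near_continuousMap_of_separatesPoints
      (Talg D) Talg_sep φ δ hδ
  exact ⟨ψ, hψ, h⟩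

lemma Q_one (z : Fin D → ℝ) : Q 1 z = ∑ i, z i * z i := by
  simp [Q, Matrix.one_mulVec, dotProduct]

lemma memℒp_gauss : MemLp (gauss (0 : Fin D → ℝ) 1) 2 (volume : Measure (Fin D → ℝ)) := by
  rw [memLp_two_iff_integrable_sq (gauss_continuous 0 1).aestronglyMeasurable]
  have heq : (fun z : Fin D → ℝ => gauss 0 1 z ^ 2)
      = fun z : Fin D → ℝ => ∏ i, Real.exp (-2 * z i ^ 2) := by
    funext z
    rw [gauss, sub_zero, Q_one, ← Real.exp_sum, ← Real.exp_nat_mul]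
    push_cast
    rw [← Finset.sum_neg_distrib, Finset.mul_sum]
    congr 1
    exact Finset.sum_congr rfl fun i _ => by ring
  rw [heq]
  exact Integrable.fintype_prod (fun i => integrable_exp_neg_mul_sq two_pos)

end GaussAux


open GaussAux

/-- Gaussian mixtures (with general positive definite covariances) are dense
in `L²(ℝ^D)` w.r.t. Lebesgue measure. -/
theorem stmt_5 (D : ℕ) (f : (Fin D → ℝ) → ℝ) (hf : MemLp f 2 (volume : Measure (Fin D → ℝ)))
    (ε : ℝ) (hε : 0 < ε) :
    ∃ (K : ℕ) (ξ : Fin K → ℝ) (m : Fin K → (Fin D → ℝ))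
      (C : Fin K → Matrix (Fin D) (Fin D) ℝ),
      (∀ k, (C k).PosDef) ∧
      eLpNorm (fun z => f z - ∑ k, ξ k *
          Real.exp (-((z - m k) ⬝ᵥ ((C k)⁻¹).mulVec (z - m k)))) 2
        (volume : Measure (Fin D → ℝ)) ≤ ENNReal.ofReal ε := by
  classical
  have h2top : (2 : ENNReal) ≠ ⊤ := by norm_num
  have hhalf : (0:ℝ) < ε / 2 := by linarith
  obtain ⟨g, hgsupp, hgapprox, hgcont, hgmem⟩ :=
    hf.exists_hasCompactSupport_eLpNorm_sub_le h2top
      (ε := ENNReal.ofReal (ε/2)) (by simp only [ne_eq, ENNReal.ofReal_eq_zero, not_le]; linarith)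
  set w : (Fin D → ℝ) → ℝ := gauss 0 1 with hw
  have hwmem : MemLp w 2 (volume : Measure (Fin D → ℝ)) := memℒp_gauss
  set Nw : ℝ := (eLpNorm w 2 (volume : Measure (Fin D → ℝ))).toReal with hNwdef
  have hNw0 : 0 ≤ Nw := ENNReal.toReal_nonneg
  set δ : ℝ := (ε/2) / (2*(Nw+1)) with hδdef
  have hδ : 0 < δ := by positivity
  set ghat : (Fin D → ℝ) → ℝ := fun z => g z * Real.exp (Q 1 z) with hghat
  have hghatcont : Continuous ghat := hgcont.mul (Real.continuous_exp.comp (Q_continuous 1))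
  have hghatsupp : HasCompactSupport ghat := hgsupp.mul_right
  set φ : C(OnePoint (Fin D → ℝ), ℝ) :=
    OnePoint.continuousMapMk ⟨ghat, hghatcont⟩ 0
      (by rw [Filter.coclosedCompact_eq_cocompact]; exact hghatsupp.is_zero_at_infty) with hφ
  have hφcoe : ∀ z : Fin D → ℝ, φ (z : OnePoint (Fin D → ℝ)) = ghat z := fun z => rfl
  have hφinf : φ (OnePoint.infty) = 0 := rfl
  obtain ⟨ψ, hψmem, hψnear⟩ := Talg_dense φ hδ
  have hψ' : ψ ∈ Submodule.span ℝ ({1} : Set C(OnePoint (Fin D → ℝ), ℝ)) ⊔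
      Submodule.span ℝ (GSet D) := by
    rw [← Submodule.span_union]; exact hψmem
  obtain ⟨u, hu, v, hv, huv⟩ := Submodule.mem_sup.mp hψ'
  obtain ⟨c, rfl⟩ := Submodule.mem_span_singleton.mp hu
  rw [Submodule.mem_span_set'] at hv
  obtain ⟨n, ξ, gs, hgssum⟩ := hv
  -- pointwise closeness
  have hpt : ∀ x : OnePoint (Fin D → ℝ), |ψ x - φ x| ≤ δ := by
    intro x
    have h1 : |(ψ - φ) x| ≤ ‖ψ - φ‖ := by
      simpa using (ψ - φ).norm_coe_le_norm x
    simpa [ContinuousMap.sub_apply] using h1.trans hψnear.le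
  choose ms As hAs hgse using fun i => (gs i).2
  have hψval : ∀ x : OnePoint (Fin D → ℝ),
      ψ x = c + ∑ i, ξ i * ((gs i : C(OnePoint (Fin D → ℝ), ℝ)) x) := by
    intro x
    rw [← huv, ← hgssum]
    simp [ContinuousMap.add_apply, ContinuousMap.sum_apply]
  have hgse' : ∀ i, (gs i : C(OnePoint (Fin D → ℝ), ℝ)) = cgauss (ms i) (hAs i) := hgse
  have hcbound : |c| ≤ δ := by
    have := hpt (OnePoint.infty)
    rw [hψval, hφinf] at this
    simpa [hgse', cgauss_infty] using this
  set vfun : (Fin D → ℝ) → ℝ := fun z => ∑ i, ξ i * gauss (ms i) (As i) z with hvfun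
  have hvz : ∀ z : Fin D → ℝ, ψ (z : OnePoint (Fin D → ℝ)) = c + vfun z := by
    intro z
    rw [hψval]
    simp [hvfun, hgse', cgauss_coe]
  have hb2 : ∀ z : Fin D → ℝ, |vfun z - ghat z| ≤ 2 * δ := by
    intro z
    have h1 := hpt (z : OnePoint (Fin D → ℝ))
    rw [hvz, hφcoe] at h1
    have h3 : |vfun z - ghat z| ≤ |c + vfun z - ghat z| + |c| := by
      have h4 := abs_add_le (c + vfun z - ghat z) (-c)
      have h5 : (c + vfun z - ghat z) + (-c) = vfun z - ghat z := by ring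
      rw [h5, abs_neg] at h4
      exact h4
    have h6 : |c + vfun z - ghat z| ≤ δ := by
      have : c + vfun z - ghat z = (c + vfun z) - ghat z := by ring
      rw [this]; exact h1
    linarith [hcbound]
  -- the gaussian product step
  choose cs mms hprod using fun i =>
    cgauss_mul (hAs i) (Matrix.PosDef.one (n := Fin D) (R := ℝ)) (ms i) (0 : Fin D → ℝ)
  have hprodz : ∀ i (z : Fin D → ℝ),
      gauss (ms i) (As i) z * w z = cs i * gauss (mms i) (As i + 1) z := by
    intro i z
    have := DFunLike.congr_fun (hprod i) (z : OnePoint (Fin D → ℝ))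
    simpa [ContinuousMap.mul_apply, ContinuousMap.smul_apply, cgauss_coe] using this
  have hgw : ∀ z : Fin D → ℝ, ghat z * w z = g z := by
    intro z
    rw [hghat, hw]
    show g z * Real.exp (Q 1 z) * gauss 0 1 z = g z
    rw [gauss, sub_zero, mul_assoc, ← Real.exp_add]
    simp
  have htotal : ∀ z : Fin D → ℝ,
      vfun z * w z = ∑ i, (ξ i * cs i) * gauss (mms i) (As i + 1) z := by
    intro z
    rw [hvfun]
    show (∑ i, ξ i * gauss (ms i) (As i) z) * w z = _
    rw [Finset.sum_mul]
    refine Finset.sum_congr rfl fun i _ => ?_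
    rw [mul_assoc, hprodz i z, ← mul_assoc]
  -- L² estimate for the second piece
  have hvwcont : Continuous fun z : Fin D → ℝ => vfun z * w z := by
    apply Continuous.mul
    · exact continuous_finset_sum _ fun i _ => (continuous_const.mul (gauss_continuous _ _))
    · exact gauss_continuous _ _
  have hsecond : eLpNorm (fun z : Fin D → ℝ => g z - vfun z * w z) 2 volume
      ≤ ENNReal.ofReal (ε/2) := by
    have hb3 : ∀ z : Fin D → ℝ, ‖g z - vfun z * w z‖ ≤ ‖(2*δ) * w z‖ := by
      intro z
      rw [Real.norm_eq_abs, Real.norm_eq_abs]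
      have hwpos : 0 < w z := gauss_pos _ _ _
      rw [abs_of_pos (by positivity : (0:ℝ) < 2*δ*w z)]
      calc |g z - vfun z * w z| = |ghat z * w z - vfun z * w z| := by rw [hgw]
        _ = |ghat z - vfun z| * |w z| := by rw [← abs_mul]; congr 1; ring
        _ ≤ (2*δ) * |w z| := by
            apply mul_le_mul_of_nonneg_right _ (abs_nonneg _)
            rw [abs_sub_comm]; exact hb2 z
        _ = 2*δ*w z := by rw [abs_of_pos hwpos]
    calc eLpNorm (fun z : Fin D → ℝ => g z - vfun z * w z) 2 volume
        ≤ eLpNorm (fun z : Fin D → ℝ => (2*δ) * w z) 2 volume := eLpNorm_mono hb3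
      _ = (‖(2*δ : ℝ)‖₊ : ENNReal) * eLpNorm w 2 volume := by
          have h' : (fun z : Fin D → ℝ => (2*δ) * w z) = (2*δ : ℝ) • w := by
            funext z; simp [smul_eq_mul]
          rw [h', eLpNorm_const_smul, enorm_eq_nnnorm]
      _ ≤ ENNReal.ofReal (ε/2) := by
          have hE : eLpNorm w 2 (volume : Measure (Fin D → ℝ)) = ENNReal.ofReal Nw := by
            rw [hNwdef, ENNReal.ofReal_toReal hwmem.2.ne]
          have hnn : (‖(2*δ : ℝ)‖₊ : ENNReal) = ENNReal.ofReal (2*δ) := by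
            rw [← enorm_eq_nnnorm, ← ofReal_norm, Real.norm_of_nonneg (by positivity)]
          rw [hnn, hE, ← ENNReal.ofReal_mul (by positivity)]
          apply ENNReal.ofReal_le_ofReal
          have hd : δ * (2*(Nw+1)) = ε/2 := div_mul_cancel₀ _ (by positivity)
          nlinarith [hδ.le, hNw0]
  -- assemble the answer
  refine ⟨n, fun i => ξ i * cs i, mms, fun i => (As i + 1)⁻¹, ?_, ?_⟩
  · exact fun i => ((hAs i).add Matrix.PosDef.one).inv
  · have hCinv : ∀ i, ((As i + 1)⁻¹)⁻¹ = As i + 1 := fun i =>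
      Matrix.nonsing_inv_nonsing_inv _ (((hAs i).add Matrix.PosDef.one).det_pos.ne'.isUnit)
    have hfun : (fun z : Fin D → ℝ => f z - ∑ k, (ξ k * cs k) *
        Real.exp (-((z - mms k) ⬝ᵥ (((As k + 1)⁻¹)⁻¹).mulVec (z - mms k))))
        = fun z : Fin D → ℝ => f z - vfun z * w z := by
      funext z
      congr 1
      rw [htotal z]
      refine Finset.sum_congr rfl fun i _ => ?_
      rw [hCinv i]
      rfl
    rw [hfun]
    have hsplit : (fun z : Fin D → ℝ => f z - vfun z * w z)
        = (f - g) + fun z : Fin D → ℝ => g z - vfun z * w z := by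
      funext z
      simp only [Pi.add_apply, Pi.sub_apply]
      ring
    rw [hsplit]
    calc eLpNorm ((f - g) + fun z : Fin D → ℝ => g z - vfun z * w z) 2 volume
        ≤ eLpNorm (f - g) 2 volume
          + eLpNorm (fun z : Fin D → ℝ => g z - vfun z * w z) 2 volume :=
          eLpNorm_add_le (hf.sub hgmem).aestronglyMeasurable
            ((hgcont.sub hvwcont).aestronglyMeasurable) one_le_two
      _ ≤ ENNReal.ofReal (ε/2) + ENNReal.ofReal (ε/2) := add_le_add hgapprox hsecond
      _ = ENNReal.ofReal ε := by
          rw [← ENNReal.ofReal_add hhalf.le hhalf.le, add_halves]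
end

section
/- Let H be a normed space, T : H → H an α-Lipschitz map with α ∈ [0,1) and unique fixed point Q°. Suppose (Q_n)ₙ and (Q°ₙ)ₙ are sequences in H, and T_{n+1} : H → H are α-Lipschitz maps with fixed points Q°_{n+1}, satisfying for all sufficiently large n: ‖Q_n − Q°ₙ‖ ≤ Δ₁, ‖Q°_{n+1} − Q°ₙ‖ ≤ Δ₂, and T Q_n = T_{n+1} Q_n. Then for all sufficiently large n, ‖Q°_{n+1} − Q°‖ ≤ α‖Q°ₙ − Q°‖ + α(2Δ₁ + Δ₂), and consequently limsup_{n→∞} ‖Q°ₙ − Q°‖ ≤ (α/(1−α))(2Δ₁ + Δ₂) and limsup_{n→∞} ‖Q_n − Q°‖ ≤ Δ₁ + (α/(1−α))(2Δ₁ + Δ₂). -/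
open Filter

/-- Error propagation in approximate policy iteration, abstracted to a normed
space: if `T` is `α`-Lipschitz with fixed point `Q°`, the `T_{n+1}` are
`α`-Lipschitz with fixed points `Q°_{n+1}`, and eventually
`‖Qₙ − Q°ₙ‖ ≤ Δ₁`, `‖Q°_{n+1} − Q°ₙ‖ ≤ Δ₂`, `T Qₙ = T_{n+1} Qₙ`, then
eventually `‖Q°_{n+1} − Q°‖ ≤ α‖Q°ₙ − Q°‖ + α(2Δ₁ + Δ₂)`, and the stated
`limsup` bounds hold. -/
theorem stmt_16 {H : Type*} [NormedAddCommGroup H]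
    (α : ℝ) (hα : 0 ≤ α) (hα1 : α < 1)
    (T : H → H) (Tn : ℕ → H → H)
    (Q₀ : H) (Qn Q₀n : ℕ → H) (Δ₁ Δ₂ : ℝ)
    (hTlip : ∀ x y : H, ‖T x - T y‖ ≤ α * ‖x - y‖)
    (hTnlip : ∀ n, ∀ x y : H, ‖Tn n x - Tn n y‖ ≤ α * ‖x - y‖)
    (hfix : T Q₀ = Q₀)
    (hfixn : ∀ n, Tn n (Q₀n n) = Q₀n n)
    (hbound : ∀ᶠ n in atTop,
      ‖Qn n - Q₀n n‖ ≤ Δ₁ ∧ ‖Q₀n (n + 1) - Q₀n n‖ ≤ Δ₂ ∧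
      T (Qn n) = Tn (n + 1) (Qn n)) :
    (∀ᶠ n in atTop,
      ‖Q₀n (n + 1) - Q₀‖ ≤ α * ‖Q₀n n - Q₀‖ + α * (2 * Δ₁ + Δ₂)) ∧
    limsup (fun n => ‖Q₀n n - Q₀‖) atTop ≤ α / (1 - α) * (2 * Δ₁ + Δ₂) ∧
    limsup (fun n => ‖Qn n - Q₀‖) atTop ≤ Δ₁ + α / (1 - α) * (2 * Δ₁ + Δ₂) := by
  obtain ⟨N, hN⟩ := eventually_atTop.mp hbound
  have hΔ1 : 0 ≤ Δ₁ := le_trans (norm_nonneg _) (hN N le_rfl).1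
  have hΔ2 : 0 ≤ Δ₂ := le_trans (norm_nonneg _) (hN N le_rfl).2.1
  have h1α : 0 < 1 - α := by linarith
  set C : ℝ := α * (2 * Δ₁ + Δ₂) with hC
  set D : ℝ := α / (1 - α) * (2 * Δ₁ + Δ₂) with hD
  have hDC : α * D + C = D := by
    rw [hD, hC]; field_simp; ring
  have hDpos : 0 ≤ D :=
    mul_nonneg (div_nonneg hα h1α.le) (by linarith)
  -- main recursion
  have key : ∀ n ≥ N, ‖Q₀n (n + 1) - Q₀‖ ≤ α * ‖Q₀n n - Q₀‖ + C := by
    intro n hn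
    obtain ⟨h1, h2, h3⟩ := hN n hn
    have e1 : Q₀n (n + 1) - Q₀ =
        (Tn (n + 1) (Q₀n (n + 1)) - Tn (n + 1) (Qn n)) + (T (Qn n) - T Q₀) := by
      rw [hfixn, hfix, h3]; abel
    have e2 : ‖Q₀n (n + 1) - Qn n‖ ≤ Δ₂ + Δ₁ := by
      calc ‖Q₀n (n + 1) - Qn n‖
          ≤ ‖Q₀n (n + 1) - Q₀n n‖ + ‖Q₀n n - Qn n‖ := norm_sub_le_norm_sub_add_norm_sub _ _ _
        _ ≤ Δ₂ + Δ₁ := by rw [norm_sub_rev (Q₀n n)]; exact add_le_add h2 h1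
    have e3 : ‖Qn n - Q₀‖ ≤ Δ₁ + ‖Q₀n n - Q₀‖ := by
      calc ‖Qn n - Q₀‖ ≤ ‖Qn n - Q₀n n‖ + ‖Q₀n n - Q₀‖ := norm_sub_le_norm_sub_add_norm_sub _ _ _
        _ ≤ Δ₁ + ‖Q₀n n - Q₀‖ := add_le_add h1 le_rfl
    calc ‖Q₀n (n + 1) - Q₀‖
        ≤ ‖Tn (n + 1) (Q₀n (n + 1)) - Tn (n + 1) (Qn n)‖ + ‖T (Qn n) - T Q₀‖ := by
          rw [e1]; exact norm_add_le _ _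
      _ ≤ α * ‖Q₀n (n + 1) - Qn n‖ + α * ‖Qn n - Q₀‖ :=
          add_le_add (hTnlip _ _ _) (hTlip _ _)
      _ ≤ α * (Δ₂ + Δ₁) + α * (Δ₁ + ‖Q₀n n - Q₀‖) :=
          add_le_add (mul_le_mul_of_nonneg_left e2 hα) (mul_le_mul_of_nonneg_left e3 hα)
      _ = α * ‖Q₀n n - Q₀‖ + C := by rw [hC]; ring
  have geom : ∀ n, N ≤ n → ‖Q₀n n - Q₀‖ ≤ α ^ (n - N) * ‖Q₀n N - Q₀‖ + D := by
    intro n hn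
    induction n, hn using Nat.le_induction with
    | base => simp; linarith
    | succ n hn ih =>
      have h2 : n + 1 - N = (n - N) + 1 := by omega
      have step := key n hn
      have := mul_le_mul_of_nonneg_left ih hα
      rw [h2, pow_succ]
      nlinarith [hDC]
  have hev : ∀ ε > (0:ℝ), ∀ᶠ n in atTop, ‖Q₀n n - Q₀‖ ≤ D + ε := by
    intro ε hε
    have htend : Tendsto (fun k : ℕ => α ^ k * ‖Q₀n N - Q₀‖) atTop (nhds 0) := by
      simpa using (tendsto_pow_atTop_nhds_zero_of_lt_one hα hα1).mul_const ‖Q₀n N - Q₀‖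
    obtain ⟨K, hK⟩ := eventually_atTop.mp (htend.eventually_le_const hε)
    refine eventually_atTop.mpr ⟨N + K, fun n hn => ?_⟩
    have h1 : N ≤ n := by omega
    have h2 : K ≤ n - N := by omega
    have := geom n h1
    have := hK (n - N) h2
    linarith
  have hcb : ∀ f : ℕ → H, IsCoboundedUnder (· ≤ ·) atTop (fun n => ‖f n - Q₀‖) := by
    intro f
    exact (isBoundedUnder_of ⟨0, fun n => norm_nonneg _⟩ :
      IsBoundedUnder (· ≥ ·) atTop _).isCoboundedUnder_le
  have lim1 : limsup (fun n => ‖Q₀n n - Q₀‖) atTop ≤ D := by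
    refine le_of_forall_pos_le_add fun ε hε => ?_
    exact limsup_le_of_le (hcb Q₀n) (hev ε hε)
  have lim2 : limsup (fun n => ‖Qn n - Q₀‖) atTop ≤ Δ₁ + D := by
    refine le_of_forall_pos_le_add fun ε hε => ?_
    refine limsup_le_of_le (hcb Qn) ?_
    filter_upwards [hev ε hε, eventually_atTop.mpr ⟨N, hN⟩] with n h1 h2
    calc ‖Qn n - Q₀‖ ≤ ‖Qn n - Q₀n n‖ + ‖Q₀n n - Q₀‖ := norm_sub_le_norm_sub_add_norm_sub _ _ _
      _ ≤ Δ₁ + (D + ε) := add_le_add h2.1 h1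
      _ = Δ₁ + D + ε := by ring
  exact ⟨eventually_atTop.mpr ⟨N, key⟩, lim1, lim2⟩
end
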